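/- arXiv:hep-th/0512071 — 4 statements merged into one kernel-verified Lean document; each statement's English description precedes it below -/
import Mathlib

section
/- For real numbers x, y, z with 0 < x, 0 < x + z, x + z < 1, x + y + z < 1, y < 1, y + z < 1, and for all real u, v, w, the quadratic form Q = (1/x + 1/(x+z) + 1/(1-x-z) + 1/(1-x-y-z))·u² + (1/(1-x-y-z) - 1/(2(1-y)) - 1/(2(1-y-z)))·v² + (1/(x+z) + 1/(1-x-z) + 1/(1-x-y-z) - 1/(2(1-z)) - 1/(2(1-y-z)))·w² + (2/(1-x-y-z))·u·v + (2/(x+z) + 2/(1-x-z) + 2/(1-x-y-z))·u·w + (2/(1-x-y-z) - 1/(1-y-z))·v·w is nonnegative. -/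
lemma key_cs (A B α β : ℝ) (hα : 0 < α) (hβ : 0 < β) :
    (A - B)^2/(α+β) ≤ A^2/α + B^2/β := by
  rw [div_add_div _ _ (ne_of_gt hα) (ne_of_gt hβ), div_le_div_iff₀ (by positivity) (by positivity)]
  nlinarith [sq_nonneg (A*β + B*α)]

set_option maxHeartbeats 1000000 in
lemma quad_aux (p q r s u v w : ℝ) (hp : 0 < p) (hq : 0 < q) (hr : 0 < r) (hs : 0 < s) :
    0 ≤ (1/p + 1/q + 1/r + 1/s) * u^2
      + (1/s - 1/(2*(q+s)) - 1/(2*(p+s))) * v^2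
      + (1/q + 1/r + 1/s - 1/(2*(p+r)) - 1/(2*(p+s))) * w^2
      + (2/s) * u * v
      + (2/q + 2/r + 2/s) * u * w
      + (2/s - 1/(p+s)) * v * w := by
  have h1 := key_cs (u+v+w) (u+w) s q hs hq
  have h2 := key_cs (u+v+w) u s p hs hp
  have h3 := key_cs (u+w) u r p hr hp
  have h4 : (0:ℝ) ≤ (u+w)^2/(2*q) + (u+w)^2/(2*r) := by positivity
  have heq : (1/p + 1/q + 1/r + 1/s) * u^2
      + (1/s - 1/(2*(q+s)) - 1/(2*(p+s))) * v^2
      + (1/q + 1/r + 1/s - 1/(2*(p+r)) - 1/(2*(p+s))) * w^2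
      + (2/s) * u * v
      + (2/q + 2/r + 2/s) * u * w
      + (2/s - 1/(p+s)) * v * w
      = (1/2)*((u+v+w)^2/s + (u+w)^2/q - (u+v+w-(u+w))^2/(s+q))
      + (1/2)*((u+v+w)^2/s + u^2/p - (u+v+w-u)^2/(s+p))
      + (1/2)*((u+w)^2/r + u^2/p - (u+w-u)^2/(r+p))
      + ((u+w)^2/(2*q) + (u+w)^2/(2*r)) := by
    have hqs : q + s ≠ 0 := by positivity
    have hps : p + s ≠ 0 := by positivity
    have hpr : p + r ≠ 0 := by positivity
    have e1 : s + q = q + s := by ring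
    have e2 : s + p = p + s := by ring
    have e3 : r + p = p + r := by ring
    rw [e1, e2, e3]
    field_simp
    ring
  rw [heq]
  linarith [h1, h2, h3, h4]

theorem quadratic_form_nonneg
    (x y z u v w : ℝ)
    (hx : 0 < x) (hxz : 0 < x + z) (hxz1 : x + z < 1)
    (hxyz : x + y + z < 1) (hy : y < 1) (hyz : y + z < 1)
    (hz : 0 < z) (hz1 : z < 1) :
    0 ≤ (1/x + 1/(x+z) + 1/(1-x-z) + 1/(1-x-y-z)) * u^2
      + (1/(1-x-y-z) - 1/(2*(1-y)) - 1/(2*(1-y-z))) * v^2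
      + (1/(x+z) + 1/(1-x-z) + 1/(1-x-y-z) - 1/(2*(1-z)) - 1/(2*(1-y-z))) * w^2
      + (2/(1-x-y-z)) * u * v
      + (2/(x+z) + 2/(1-x-z) + 2/(1-x-y-z)) * u * w
      + (2/(1-x-y-z) - 1/(1-y-z)) * v * w := by
  have hr : (0:ℝ) < 1 - x - z := by linarith
  have hs : (0:ℝ) < 1 - x - y - z := by linarith
  rw [show (1:ℝ) - y - z = x + (1-x-y-z) by ring,
      show (1:ℝ) - y = (x+z) + (1-x-y-z) by ring,
      show (1:ℝ) - z = x + (1-x-z) by ring]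
  exact quad_aux x (x+z) (1-x-z) (1-x-y-z) u v w hx hxz hr hs
end

section
/- For natural numbers m, l, h, u with u ≤ min(m,l) and setting A(m,l,h,u) = √(m!·(m+h)!·l!·(l+h)!)/((m-u)!·(l-u)!·(h+u)!·u!): (l-u)·A(m,l,h,u) = A(m,l,h,u+1)·[ (m+1)(m+h+1)/(m-u) − (2m+h+1) + (m-u-1) ], provided u < m and u < l. -/
/-! Raising `u` by one multiplies the denominator of `A(m,l,h,u)` by `(u+1)(h+u+1)` and divides it
by `(m-u)(l-u)`, while the bracket collapses to `(u+1)(h+u+1)/(m-u)`. -/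

/-- The combinatorial factor `A(m,l,h,u)`. -/
noncomputable def calA (m l h u : ℕ) : ℝ :=
  Real.sqrt ((Nat.factorial m) * (Nat.factorial (m+h)) * (Nat.factorial l)
    * (Nat.factorial (l+h)))
  / ((Nat.factorial (m-u)) * (Nat.factorial (l-u)) * (Nat.factorial (h+u))
    * (Nat.factorial u))

open Nat in
theorem factorial_denominator_succ_mul {m l h u : ℕ} (hum : u < m) (hul : u < l) :
    (m - u)! * (l - u)! * (h + u)! * u ! * ((u + 1) * (h + u + 1))
      = (m - (u + 1))! * (l - (u + 1))! * (h + (u + 1))! * (u + 1)! * ((m - u) * (l - u)) := by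
  obtain ⟨a, rfl⟩ := Nat.exists_eq_add_of_lt hum
  obtain ⟨b, rfl⟩ := Nat.exists_eq_add_of_lt hul
  simp only [show u + a + 1 - u = a + 1 by omega, show u + a + 1 - (u + 1) = a by omega,
    show u + b + 1 - u = b + 1 by omega, show u + b + 1 - (u + 1) = b by omega,
    ← add_assoc, factorial_succ]
  ring

open Nat in
theorem calA_succ_mul {m l h u : ℕ} (hum : u < m) (hul : u < l) :
    calA m l h (u + 1) * (((u : ℝ) + 1) * ((h : ℝ) + u + 1))
      = ((m : ℝ) - u) * ((l : ℝ) - u) * calA m l h u := by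
  have hden := congrArg (Nat.cast (R := ℝ)) (factorial_denominator_succ_mul (h := h) hum hul)
  push_cast [Nat.cast_sub hum.le, Nat.cast_sub hul.le] at hden
  unfold calA
  rw [div_mul_eq_mul_div, mul_div_assoc', div_eq_div_iff (by positivity) (by positivity)]
  linear_combination (Real.sqrt (m ! * (m + h)! * l ! * (l + h)! : ℝ)) * hden

theorem shift_bracket_eq {m h u : ℝ} (hmu : m ≠ u) :
    (m + 1) * (m + h + 1) / (m - u) - (2 * m + h + 1) + (m - u - 1)
      = (u + 1) * (h + u + 1) / (m - u) := by
  field_simp [sub_ne_zero.mpr hmu]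
  ring

theorem calA_shift_identity (m l h u : ℕ) (hum : u < m) (hul : u < l) :
    ((l : ℝ) - u) * calA m l h u
      = calA m l h (u+1)
        * (((m : ℝ)+1) * ((m : ℝ)+(h : ℝ)+1) / ((m : ℝ) - u)
            - (2*(m : ℝ)+(h : ℝ)+1) + ((m : ℝ) - (u : ℝ) - 1)) := by
  have hmu : (m : ℝ) ≠ u := by exact_mod_cast hum.ne'
  rw [shift_bracket_eq hmu, mul_div_assoc', calA_succ_mul hum hul]
  field_simp [sub_ne_zero.mpr hmu]
end

section
/- Let Ω > 0, B be real, t > 0, and define A(x,x') = (Ω cosh(Ωt)/(2 sinh(Ωt)))(|x|² + |x'|²) − (Ω cosh(Bt)/sinh(Ωt))(x·x') − i(Ω sinh(Bt)/sinh(Ωt))(x∧x') for x, x' ∈ ℝ², where x·x' = x₀x'₀ + x₁x'₁ and x∧x' = x₀x'₁ − x₁x'₀. Then the kernel K_t(x,x') = (Ω/(2π sinh(Ωt))) e^{−A(x,x')} satisfies the differential equation ∂K_t/∂t + H_x K_t = 0, where H = (1/2)[−∂₀² − ∂₁² + Ω²|x|² − 2iB(x₀∂₁ − x₁∂₀)]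 acts in the x variable. -/
open Real Complex

/-- The generalized Mehler kernel with magnetic term `B`. -/
noncomputable def mehlerK (Ω B : ℝ) (t x0 x1 y0 y1 : ℝ) : ℂ :=
  ((Ω / (2 * Real.pi * Real.sinh (Ω*t)) : ℝ) : ℂ) *
    Complex.exp (-(
      ((Ω * Real.cosh (Ω*t) / (2 * Real.sinh (Ω*t)) : ℝ) : ℂ)
        * (((x0^2 + x1^2 + y0^2 + y1^2 : ℝ)) : ℂ)
      - ((Ω * Real.cosh (B*t) / Real.sinh (Ω*t) : ℝ) : ℂ)
        * (((x0*y0 + x1*y1 : ℝ)) : ℂ)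
      - Complex.I * ((Ω * Real.sinh (B*t) / Real.sinh (Ω*t) : ℝ) : ℂ)
        * (((x0*y1 - x1*y0 : ℝ)) : ℂ)))

/-!
The kernel is a Gaussian `N e^{-(a (|x|² + |y|²) - b x·y - i c x∧y)}` with time-dependent
coefficients. Applying `∂ₜ + H` to such a Gaussian gives the Gaussian times a quadratic polynomial
in `x, y`, which vanishes as soon as the coefficients solve the Riccati system
`N' = -2aN`, `a' = Ω²/2 - 2a²`, `b' = Bc - 2ab`, `c' = Bb - 2ac` subject to
`b² - c² = 4a² - Ω²`. For the Mehler coefficients `a = Ω coth(Ωt)/2`,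
`b = Ω cosh(Bt)/sinh(Ωt)`, `c = Ω sinh(Bt)/sinh(Ωt)` and `N = Ω/(2π sinh(Ωt))`, the equations
for `N`, `b`, `c` are the quotient rule, while the equation for `a` and the constraint both come
down to `cosh² - sinh² = 1`.
-/

theorem deriv_deriv_of_hasDerivAt_mul_self {f g : ℝ → ℂ} {m : ℂ} {x : ℝ}
    (hf : ∀ u, HasDerivAt f (g u * f u) u) (hg : HasDerivAt g m x) :
    deriv (deriv f) x = (m + g x ^ 2) * f x := by
  rw [show deriv f = fun u => g u * f u from funext fun u => (hf u).deriv]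
  exact (hg.mul (hf x)).deriv.trans (by ring)

theorem hasDerivAt_ofReal_affine (p q : ℂ) (x : ℝ) :
    HasDerivAt (fun u : ℝ => p * u + q) p x := by
  simpa using ((hasDerivAt_id (x : ℂ)).const_mul p).add_const q |>.comp_ofReal

noncomputable def gaussExponent (a b c : ℂ) (x0 x1 y0 y1 : ℝ) : ℂ :=
  -(a * ((x0^2 + x1^2 + y0^2 + y1^2 : ℝ) : ℂ) - b * ((x0*y0 + x1*y1 : ℝ) : ℂ)
    - I * c * ((x0*y1 - x1*y0 : ℝ) : ℂ))

noncomputable def gaussKernel (N a b c : ℂ) (x0 x1 y0 y1 : ℝ) : ℂ :=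
  N * exp (gaussExponent a b c x0 x1 y0 y1)

theorem hasDerivAt_gaussExponent_left (a b c : ℂ) (x0 x1 y0 y1 : ℝ) :
    HasDerivAt (fun u => gaussExponent a b c u x1 y0 y1)
      (-2 * a * x0 + b * y0 + I * c * y1) x0 := by
  have hQ : HasDerivAt (fun u : ℝ => u^2 + x1^2 + y0^2 + y1^2) (2 * x0) x0 := by
    simpa using (((hasDerivAt_pow 2 x0).add_const (x1^2)).add_const (y0^2)).add_const (y1^2)
  have hD : HasDerivAt (fun u : ℝ => u * y0 + x1 * y1) y0 x0 := by
    simpa using ((hasDerivAt_id x0).mul_const y0).add_const (x1 * y1)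
  have hW : HasDerivAt (fun u : ℝ => u * y1 - x1 * y0) y1 x0 := by
    simpa using ((hasDerivAt_id x0).mul_const y1).sub_const (x1 * y0)
  refine (((hQ.ofReal_comp.const_mul a).sub (hD.ofReal_comp.const_mul b)).sub
    (hW.ofReal_comp.const_mul (I * c))).neg.congr_deriv ?_
  push_cast
  ring

theorem hasDerivAt_gaussKernel_left (N a b c : ℂ) (x0 x1 y0 y1 : ℝ) :
    HasDerivAt (fun u => gaussKernel N a b c u x1 y0 y1)
      ((-2 * a * x0 + b * y0 + I * c * y1) * gaussKernel N a b c x0 x1 y0 y1) x0 :=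
  ((hasDerivAt_gaussExponent_left a b c x0 x1 y0 y1).cexp.const_mul N).congr_deriv
    (by unfold gaussKernel; ring)

/-- A quarter turn of both `x` and `y` preserves `|x|² + |y|²`, `x·y` and `x∧y`. -/
theorem gaussKernel_rotate (N a b c : ℂ) (x0 x1 y0 y1 : ℝ) :
    gaussKernel N a b c x0 x1 y0 y1 = gaussKernel N a b c x1 (-x0) y1 (-y0) := by
  unfold gaussKernel gaussExponent
  push_cast
  ring_nf

theorem hasDerivAt_gaussKernel_right (N a b c : ℂ) (x0 x1 y0 y1 : ℝ) :
    HasDerivAt (fun v => gaussKernel N a b c x0 v y0 y1)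
      ((-2 * a * x1 + b * y1 - I * c * y0) * gaussKernel N a b c x0 x1 y0 y1) x1 := by
  simp only [gaussKernel_rotate N a b c x0]
  convert hasDerivAt_gaussKernel_left N a b c x1 (-x0) y1 (-y0) using 1
  push_cast
  ring

theorem deriv_deriv_gaussKernel_left (N a b c : ℂ) (x0 x1 y0 y1 : ℝ) :
    deriv (deriv fun u => gaussKernel N a b c u x1 y0 y1) x0
      = (-2 * a + (-2 * a * x0 + b * y0 + I * c * y1) ^ 2) * gaussKernel N a b c x0 x1 y0 y1 :=
  (deriv_deriv_of_hasDerivAt_mul_self (g := fun u : ℝ => -2 * a * u + (b * y0 + I * c * y1))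
    (fun u => (hasDerivAt_gaussKernel_left N a b c u x1 y0 y1).congr_deriv (by ring))
    (hasDerivAt_ofReal_affine _ _ x0)).trans (by ring)

theorem deriv_deriv_gaussKernel_right (N a b c : ℂ) (x0 x1 y0 y1 : ℝ) :
    deriv (deriv fun v => gaussKernel N a b c x0 v y0 y1) x1
      = (-2 * a + (-2 * a * x1 + b * y1 - I * c * y0) ^ 2) * gaussKernel N a b c x0 x1 y0 y1 :=
  (deriv_deriv_of_hasDerivAt_mul_self (g := fun v : ℝ => -2 * a * v + (b * y1 - I * c * y0))
    (fun v => (hasDerivAt_gaussKernel_right N a b c x0 v y0 y1).congr_deriv (by ring))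
    (hasDerivAt_ofReal_affine _ _ x1)).trans (by ring)

theorem hasDerivAt_gaussExponent_time {a b c : ℝ → ℂ} {a' b' c' : ℂ} {t : ℝ}
    (ha : HasDerivAt a a' t) (hb : HasDerivAt b b' t) (hc : HasDerivAt c c' t)
    (x0 x1 y0 y1 : ℝ) :
    HasDerivAt (fun s => gaussExponent (a s) (b s) (c s) x0 x1 y0 y1)
      (gaussExponent a' b' c' x0 x1 y0 y1) t :=
  (((ha.mul_const _).sub (hb.mul_const _)).sub ((hc.const_mul I).mul_const _)).neg

theorem hasDerivAt_gaussKernel_time {N a b c : ℝ → ℂ} {N' a' b' c' : ℂ} {t : ℝ}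
    (hN : HasDerivAt N N' t) (ha : HasDerivAt a a' t) (hb : HasDerivAt b b' t)
    (hc : HasDerivAt c c' t) (x0 x1 y0 y1 : ℝ) :
    HasDerivAt (fun s => gaussKernel (N s) (a s) (b s) (c s) x0 x1 y0 y1)
      (N' * exp (gaussExponent (a t) (b t) (c t) x0 x1 y0 y1)
        + gaussExponent a' b' c' x0 x1 y0 y1
          * gaussKernel (N t) (a t) (b t) (c t) x0 x1 y0 y1) t := by
  refine (hN.mul (hasDerivAt_gaussExponent_time ha hb hc x0 x1 y0 y1).cexp).congr_deriv ?_
  unfold gaussKernel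
  ring

noncomputable def magneticHeatOperator (Ω B : ℝ) (K : ℝ → ℝ → ℝ → ℂ) (t x0 x1 : ℝ) : ℂ :=
  deriv (fun s => K s x0 x1) t
    + (1/2 : ℂ) *
      ( - deriv (fun a => deriv (fun a' => K t a' x1) a) x0
        - deriv (fun b => deriv (fun b' => K t x0 b') b) x1
        + ((Ω^2 : ℝ) : ℂ) * ((x0^2 + x1^2 : ℝ) : ℂ) * K t x0 x1
        - 2 * I * (B : ℂ) *
          ((x0 : ℂ) * deriv (fun b => K t x0 b) x1 - (x1 : ℂ) * deriv (fun a => K t a x1) x0))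

theorem magneticHeatOperator_gaussKernel_eq_zero {Ω B t : ℝ} {N a b c : ℝ → ℂ}
    (hN : HasDerivAt N (-2 * a t * N t) t)
    (ha : HasDerivAt a (Ω ^ 2 / 2 - 2 * a t ^ 2) t)
    (hb : HasDerivAt b (B * c t - 2 * a t * b t) t)
    (hc : HasDerivAt c (B * b t - 2 * a t * c t) t)
    (hbc : b t ^ 2 - c t ^ 2 = 4 * a t ^ 2 - Ω ^ 2) (y0 y1 x0 x1 : ℝ) :
    magneticHeatOperator Ω B (fun s u v => gaussKernel (N s) (a s) (b s) (c s) u v y0 y1) t x0 x1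
      = 0 := by
  unfold magneticHeatOperator
  rw [(hasDerivAt_gaussKernel_time hN ha hb hc x0 x1 y0 y1).deriv,
    deriv_deriv_gaussKernel_left, deriv_deriv_gaussKernel_right,
    (hasDerivAt_gaussKernel_left _ _ _ _ x0 x1 y0 y1).deriv,
    (hasDerivAt_gaussKernel_right _ _ _ _ x0 x1 y0 y1).deriv]
  set E := cexp (gaussExponent (a t) (b t) (c t) x0 x1 y0 y1)
  set K := gaussKernel (N t) (a t) (b t) (c t) x0 x1 y0 y1
  have hK : K = N t * E := rfl
  unfold gaussExponent
  push_cast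
  linear_combination (2 * a t) * hK - K * (y0 ^ 2 + y1 ^ 2) / 2 * hbc
    + K * (B * c t * (x0 * y0 + x1 * y1) - c t ^ 2 * (y0 ^ 2 + y1 ^ 2) / 2) * I_sq

theorem hasDerivAt_sinh_mul (k t : ℝ) :
    HasDerivAt (fun s => Real.sinh (k * s)) (k * Real.cosh (k * t)) t :=
  ((hasDerivAt_id t).const_mul k).sinh.congr_deriv (by simp only [id, mul_one, mul_comm])

theorem hasDerivAt_cosh_mul (k t : ℝ) :
    HasDerivAt (fun s => Real.cosh (k * s)) (k * Real.sinh (k * t)) t :=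
  ((hasDerivAt_id t).const_mul k).cosh.congr_deriv (by simp only [id, mul_one, mul_comm])

noncomputable def mehlerNorm (Ω t : ℝ) : ℝ := Ω / (2 * π * Real.sinh (Ω * t))

noncomputable def mehlerA (Ω t : ℝ) : ℝ := Ω * Real.cosh (Ω * t) / (2 * Real.sinh (Ω * t))

noncomputable def mehlerB (Ω B t : ℝ) : ℝ := Ω * Real.cosh (B * t) / Real.sinh (Ω * t)

noncomputable def mehlerC (Ω B t : ℝ) : ℝ := Ω * Real.sinh (B * t) / Real.sinh (Ω * t)

section Mehler

variable {Ω B t : ℝ}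

theorem hasDerivAt_mehlerNorm (hs : Real.sinh (Ω * t) ≠ 0) :
    HasDerivAt (mehlerNorm Ω) (-2 * mehlerA Ω t * mehlerNorm Ω t) t := by
  refine ((hasDerivAt_const t Ω).div ((hasDerivAt_sinh_mul Ω t).const_mul (2 * π))
    (mul_ne_zero (by positivity) hs)).congr_deriv ?_
  unfold mehlerA mehlerNorm
  field_simp
  ring

theorem hasDerivAt_mehlerA (hs : Real.sinh (Ω * t) ≠ 0) :
    HasDerivAt (mehlerA Ω) (Ω ^ 2 / 2 - 2 * mehlerA Ω t ^ 2) t := by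
  refine (((hasDerivAt_cosh_mul Ω t).const_mul Ω).div ((hasDerivAt_sinh_mul Ω t).const_mul 2)
    (mul_ne_zero (by positivity) hs)).congr_deriv ?_
  unfold mehlerA
  field_simp

theorem hasDerivAt_mehlerB (hs : Real.sinh (Ω * t) ≠ 0) :
    HasDerivAt (mehlerB Ω B) (B * mehlerC Ω B t - 2 * mehlerA Ω t * mehlerB Ω B t) t := by
  refine (((hasDerivAt_cosh_mul B t).const_mul Ω).div (hasDerivAt_sinh_mul Ω t) hs).congr_deriv ?_
  unfold mehlerA mehlerB mehlerC
  field_simp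

theorem hasDerivAt_mehlerC (hs : Real.sinh (Ω * t) ≠ 0) :
    HasDerivAt (mehlerC Ω B) (B * mehlerB Ω B t - 2 * mehlerA Ω t * mehlerC Ω B t) t := by
  refine (((hasDerivAt_sinh_mul B t).const_mul Ω).div (hasDerivAt_sinh_mul Ω t) hs).congr_deriv ?_
  unfold mehlerA mehlerB mehlerC
  field_simp

theorem mehlerB_sq_sub_mehlerC_sq (hs : Real.sinh (Ω * t) ≠ 0) :
    mehlerB Ω B t ^ 2 - mehlerC Ω B t ^ 2 = 4 * mehlerA Ω t ^ 2 - Ω ^ 2 := by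
  unfold mehlerA mehlerB mehlerC
  field_simp
  linear_combination 4 * Ω ^ 2 * (Real.cosh_sq (B * t) - Real.cosh_sq (Ω * t))

end Mehler

theorem mehler_kernel_heat_equation (Ω B : ℝ) (hΩ : 0 < Ω)
    (t : ℝ) (ht : 0 < t) (x0 x1 y0 y1 : ℝ) :
    deriv (fun s => mehlerK Ω B s x0 x1 y0 y1) t
    + (1/2 : ℂ) *
      ( - deriv (fun a => deriv (fun a' => mehlerK Ω B t a' x1 y0 y1) a) x0
        - deriv (fun b => deriv (fun b' => mehlerK Ω B t x0 b' y0 y1) b) x1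
        + ((Ω^2 : ℝ) : ℂ) * ((x0^2 + x1^2 : ℝ) : ℂ) * mehlerK Ω B t x0 x1 y0 y1
        - 2 * Complex.I * (B : ℂ) *
          ( (x0 : ℂ) * deriv (fun b => mehlerK Ω B t x0 b y0 y1) x1
            - (x1 : ℂ) * deriv (fun a => mehlerK Ω B t a x1 y0 y1) x0 ) )
    = 0 := by
  have hs : Real.sinh (Ω * t) ≠ 0 := Real.sinh_ne_zero.2 (by positivity)
  change magneticHeatOperator Ω B (fun s u v => mehlerK Ω B s u v y0 y1) t x0 x1 = 0
  -- `mehlerK Ω B s` is `gaussKernel` of the Mehler coefficients at `s` by definition.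
  exact magneticHeatOperator_gaussKernel_eq_zero
    ((hasDerivAt_mehlerNorm hs).ofReal_comp.congr_deriv (by push_cast; ring))
    ((hasDerivAt_mehlerA hs).ofReal_comp.congr_deriv (by push_cast; ring))
    ((hasDerivAt_mehlerB hs).ofReal_comp.congr_deriv (by push_cast; ring))
    ((hasDerivAt_mehlerC hs).ofReal_comp.congr_deriv (by push_cast; ring))
    (by exact_mod_cast mehlerB_sq_sub_mehlerC_sq hs) y0 y1 x0 x1
end

section
/- Define g(x,y,z) = (2−2y−z)·ln(√(1−α)/(1+Cα)) + (2x+z)·ln(α√(C(1+C))/√(1−α)) − y·ln(1+Cα) + ((1−y)/2)·ln(1−y) + ((1−z)/2)·ln(1−z) + ((1−y−z)/2)·ln(1−y−z) − x·ln x − (x+z)·ln(x+z) − (1−x−z)·ln(1−x−z) − (1−x−y−z)·ln(1−x−y−z), for parameters 0 < α < 1, C > 0. Then at the point x₀ = Cα/(1+Cα), y₀ = 1/(1+C), z₀ = 0, we have g(x₀,y₀,z₀) = 0. -/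
open Real

/-! At `z = 0`, every logarithm in `g (C*α/(1+C*α)) (1/(1+C)) 0` splits into a combination of
`log α`, `log C`, `log (1-α)`, `log (1+C*α)` and `log (1+C)`. After this expansion the
expression is a polynomial identity in `x` and `y` that holds for all `x`, `y`: the specific
critical point only enters through the factorisations of `x`, `1-x`, `1-y` and `1-x-y`. -/

theorem g_vanishes_at_critical_point (α C : ℝ) (hα0 : 0 < α) (hα1 : α < 1)
    (hC : 0 < C) :
    let g : ℝ → ℝ → ℝ → ℝ := fun x y z =>
      (2 - 2*y - z) * Real.log (Real.sqrt (1-α) / (1+C*α))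
      + (2*x + z) * Real.log (α * Real.sqrt (C*(1+C)) / Real.sqrt (1-α))
      - y * Real.log (1+C*α)
      + ((1-y)/2) * Real.log (1-y) + ((1-z)/2) * Real.log (1-z)
      + ((1-y-z)/2) * Real.log (1-y-z)
      - x * Real.log x - (x+z) * Real.log (x+z)
      - (1-x-z) * Real.log (1-x-z)
      - (1-x-y-z) * Real.log (1-x-y-z)
    g (C*α/(1+C*α)) (1/(1+C)) 0 = 0 := by
  intro g
  have ha : 0 < 1 + C*α := by positivity
  have hb : 0 < 1 + C := by positivity
  have hβ : 0 < 1 - α := sub_pos.2 hα1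
  have log_x : log (C*α/(1+C*α)) = log C + log α - log (1+C*α) := by
    rw [log_div (by positivity) ha.ne', log_mul hC.ne' hα0.ne']
  have log_one_sub_x : log (1 - C*α/(1+C*α)) = -log (1+C*α) := by
    rw [one_sub_div ha.ne', add_sub_cancel_right, one_div, log_inv]
  have log_one_sub_y : log (1 - 1/(1+C)) = log C - log (1+C) := by
    rw [one_sub_div hb.ne', add_sub_cancel_left, log_div hC.ne' hb.ne']
  have log_one_sub_x_sub_y : log (1 - C*α/(1+C*α) - 1/(1+C))
      = log C + log (1-α) - log (1+C*α) - log (1+C) := by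
    rw [show 1 - C*α/(1+C*α) - 1/(1+C) = C*(1-α) / ((1+C*α)*(1+C)) by field_simp; ring,
      log_div (by positivity) (by positivity), log_mul hC.ne' hβ.ne', log_mul ha.ne' hb.ne']
    ring
  have log_first_base : log (√(1-α) / (1+C*α)) = log (1-α) / 2 - log (1+C*α) := by
    rw [log_div (by positivity) ha.ne', log_sqrt hβ.le]
  have log_second_base : log (α * √(C*(1+C)) / √(1-α))
      = log α + log C / 2 + log (1+C) / 2 - log (1-α) / 2 := by
    rw [log_div (by positivity) (by positivity), log_mul hα0.ne' (by positivity),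
      log_sqrt (by positivity), log_sqrt hβ.le, log_mul hC.ne' hb.ne']
    ring
  simp only [g, sub_zero, add_zero, log_one, mul_zero]
  rw [log_first_base, log_second_base, log_x, log_one_sub_x, log_one_sub_y,
    log_one_sub_x_sub_y]
  ring
end
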